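/- Let μ be a composition of length n and define κ_μ^{(m)}(q,t) := ∑_{i=1}^{n+m} t^{n+m} α_μ^{(m)}(i) where t^{n+m}α_μ^{(m)}(i) = q^{μ_i} t^{n+m+1−β_{μ*0^m}(i)} for i ≤ n, and t^{n+m}α_μ^{(m)}(i) = t^{#{j: μ_j ≠ 0}} t^{m+1−(i−n)} for n < i ≤ n+m. Then in the t-adic topology on Q(q,t), the sequence (κ_μ^{(m)}(q,t))_{m≥0} converges to κ_μ(q,t) = ∑_{i: μ_i ≠ 0} q^{μ_i} t^{n+1−β_μ(i)} + t^{1+#{j: μ_j ≠ 0}}/(1−t). -/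

import Mathlib

open Finset

/-- `β_ν(i)` for a composition `ν` of length `N`. -/
def compBeta {N : ℕ} (ν : Fin N → ℕ) (i : Fin N) : ℕ :=
  (univ.filter (fun j : Fin N => j ≤ i ∧ ν j ≤ ν i)).card +
  (univ.filter (fun j : Fin N => i < j ∧ ν j < ν i)).card

/-- The composition `μ * 0^m`. -/
def appendZeros {n : ℕ} (μ : Fin n → ℕ) (m : ℕ) : Fin (n + m) → ℕ :=
  fun j => if h : (j : ℕ) < n then μ ⟨j, h⟩ else 0

/-- The field `ℚ(q,t)`. -/
abbrev Qqt : Type := RatFunc (RatFunc ℚ)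

/-- The variable `q` of `ℚ(q,t)`. -/
noncomputable def qq : Qqt := RatFunc.C RatFunc.X

/-- The variable `t` of `ℚ(q,t)`. -/
noncomputable def tt : Qqt := RatFunc.X

/-- The `t`-adic valuation (order of vanishing at `t = 0`). -/
noncomputable def tOrd {K : Type*} [Field K] (f : RatFunc K) : ℤ :=
  (Polynomial.rootMultiplicity 0 f.num : ℤ) - (Polynomial.rootMultiplicity 0 f.denom : ℤ)

/-- Convergence in the `t`-adic topology on `ℚ(q,t)`. -/
def TAdicConv {K : Type*} [Field K] (a : ℕ → RatFunc K) (L : RatFunc K) : Prop :=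
  ∀ N : ℤ, ∃ M : ℕ, ∀ m ≥ M, a m = L ∨ N ≤ tOrd (a m - L)

/-- `κ_μ^{(m)}(q,t) = ∑_{i=1}^{n+m} t^{n+m} α_μ^{(m)}(i)`, where
`t^{n+m}α_μ^{(m)}(i) = q^{μ_i} t^{n+m+1−β_{μ*0^m}(i)}` for `i ≤ n` and
`t^{n+m}α_μ^{(m)}(i) = t^{#{j : μ_j ≠ 0}} t^{m+1−(i−n)}` for `n < i ≤ n+m`
(the latter written below with `i = n + r`, `1 ≤ r ≤ m`). -/
noncomputable def kappaM {n : ℕ} (μ : Fin n → ℕ) (m : ℕ) : Qqt :=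
  (∑ i : Fin n, qq ^ (μ i) * tt ^ (n + m + 1 - compBeta (appendZeros μ m) (Fin.castAdd m i)))
    + ∑ r ∈ Finset.Icc 1 m,
        tt ^ ((univ.filter (fun j : Fin n => μ j ≠ 0)).card) * tt ^ (m + 1 - r)

/-! The difference `κ_μ^{(m)} - κ_μ` is `t^m E` for an `E` independent of `m`: for `μ_i ≠ 0`
the shift `β_{μ*0^m}(i) = β_μ(i) + m` cancels the extra `t^m`, for `μ_i = 0` the term keeps a
factor `t^m`, and the finite geometric tail `t^{c+1}(1 - t^m)/(1 - t)` misses the limit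
`t^{c+1}/(1 - t)` by `t^m · t^{c+1}/(1 - t)`. Since `ord_t (t^m E) = m + ord_t E`, the difference
tends to `0` `t`-adically. -/

open Polynomial in
theorem tOrd_algebraMap_div {K : Type*} [Field K] {p q : K[X]} (hp : p ≠ 0) (hq : q ≠ 0) :
    tOrd (algebraMap K[X] (RatFunc K) p / algebraMap K[X] (RatFunc K) q)
      = (rootMultiplicity 0 p : ℤ) - rootMultiplicity 0 q := by
  set f := algebraMap K[X] (RatFunc K) p / algebraMap K[X] (RatFunc K) q
  have hf : f ≠ 0 := div_ne_zero (RatFunc.algebraMap_ne_zero hp) (RatFunc.algebraMap_ne_zero hq)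
  have cross : f.num * q = p * f.denom := by
    apply RatFunc.algebraMap_injective K
    rw [map_mul, map_mul, ← div_eq_div_iff (RatFunc.algebraMap_ne_zero f.denom_ne_zero)
      (RatFunc.algebraMap_ne_zero hq), RatFunc.num_div_denom]
  have hmult := congrArg (rootMultiplicity 0) cross
  rw [rootMultiplicity_mul (mul_ne_zero (RatFunc.num_ne_zero hf) hq),
    rootMultiplicity_mul (mul_ne_zero hp f.denom_ne_zero)] at hmult
  unfold tOrd
  omega

open Polynomial in
theorem tOrd_X_pow_mul {K : Type*} [Field K] (k : ℕ) {f : RatFunc K} (hf : f ≠ 0) :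
    tOrd (RatFunc.X ^ k * f) = k + tOrd f := by
  have hnum : X ^ k * f.num ≠ 0 := mul_ne_zero (pow_ne_zero k X_ne_zero) (RatFunc.num_ne_zero hf)
  have hfrac : RatFunc.X ^ k * f
      = algebraMap K[X] (RatFunc K) (X ^ k * f.num) / algebraMap K[X] (RatFunc K) f.denom := by
    rw [map_mul, map_pow, RatFunc.algebraMap_X, mul_div_assoc, RatFunc.num_div_denom]
  rw [hfrac, tOrd_algebraMap_div hnum f.denom_ne_zero, rootMultiplicity_mul hnum]
  have hXk : rootMultiplicity (0 : K) (X ^ k) = k := by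
    simpa using rootMultiplicity_X_sub_C_pow (0 : K) k
  rw [hXk, tOrd]
  push_cast
  ring

theorem tAdicConv_of_sub_eq_X_pow_mul {K : Type*} [Field K] {a : ℕ → RatFunc K}
    {L E : RatFunc K} (h : ∀ m, a m - L = RatFunc.X ^ m * E) : TAdicConv a L := by
  intro N
  by_cases hE : E = 0
  · exact ⟨0, fun m _ => Or.inl (sub_eq_zero.mp (by rw [h, hE, mul_zero]))⟩
  · refine ⟨(N - tOrd E).toNat, fun m hm => Or.inr ?_⟩
    rw [h, tOrd_X_pow_mul m hE]
    omega

theorem one_sub_X_ne_zero {K : Type*} [Field K] : (1 : RatFunc K) - RatFunc.X ≠ 0 := by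
  rw [sub_ne_zero, ne_comm, ← RatFunc.algebraMap_X,
    ← map_one (algebraMap (Polynomial K) (RatFunc K)), (RatFunc.algebraMap_injective K).ne_iff]
  simpa using Polynomial.X_ne_C (1 : K)

theorem sum_Icc_pow_reflect {R : Type*} [CommSemiring R] (x : R) (m : ℕ) :
    ∑ r ∈ Icc 1 m, x ^ (m + 1 - r) = x * ∑ k ∈ range m, x ^ k := by
  rw [← Ico_add_one_right_eq_Icc,
    sum_Ico_reflect (fun j => x ^ j) 1 (m := m + 1) (n := m + 1) (by omega)]
  simp [sum_Ico_eq_sum_range, mul_sum, pow_add]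

@[simp]
theorem appendZeros_castAdd {n : ℕ} (μ : Fin n → ℕ) (m : ℕ) (i : Fin n) :
    appendZeros μ m (Fin.castAdd m i) = μ i := by
  simp [appendZeros]

@[simp]
theorem appendZeros_natAdd {n : ℕ} (μ : Fin n → ℕ) (m : ℕ) (j : Fin m) :
    appendZeros μ m (Fin.natAdd n j) = 0 := by
  simp [appendZeros]

theorem compBeta_le {N : ℕ} (ν : Fin N → ℕ) (i : Fin N) : compBeta ν i ≤ N := by
  rw [compBeta, ← card_union_of_disjoint]
  · exact (card_le_univ _).trans_eq (Fintype.card_fin N)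
  · exact disjoint_filter.mpr fun j _ hle hlt => hle.1.not_gt hlt.1

theorem compBeta_appendZeros {n : ℕ} (μ : Fin n → ℕ) (m : ℕ) (i : Fin n) :
    compBeta (appendZeros μ m) (Fin.castAdd m i) = compBeta μ i + if μ i = 0 then 0 else m := by
  have before : ∀ j : Fin m, ¬ Fin.natAdd n j ≤ Fin.castAdd m i := fun j => by
    simp only [Fin.le_def, Fin.val_natAdd, Fin.val_castAdd]; omega
  have after : ∀ j : Fin m, Fin.castAdd m i < Fin.natAdd n j := fun j => by
    simp only [Fin.lt_def, Fin.val_natAdd, Fin.val_castAdd]; omega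
  have le_iff : ∀ j : Fin n, Fin.castAdd m j ≤ Fin.castAdd m i ↔ j ≤ i := fun _ => Iff.rfl
  have lt_iff : ∀ j : Fin n, Fin.castAdd m i < Fin.castAdd m j ↔ i < j := fun _ => Iff.rfl
  simp only [compBeta, card_filter, Fin.sum_univ_add, appendZeros_castAdd, appendZeros_natAdd]
  rcases eq_or_ne (μ i) 0 with h | h
  · simp [before, le_iff, lt_iff, h]
  · simp [before, after, le_iff, lt_iff, h, Nat.pos_of_ne_zero]
    ring

noncomputable def kappaLimit {n : ℕ} (μ : Fin n → ℕ) : Qqt :=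
  (∑ i ∈ univ.filter (fun i : Fin n => μ i ≠ 0), qq ^ (μ i) * tt ^ (n + 1 - compBeta μ i))
    + tt ^ (1 + (univ.filter (fun j : Fin n => μ j ≠ 0)).card) * (1 - tt)⁻¹

theorem sum_kappaM_head {n : ℕ} (μ : Fin n → ℕ) (m : ℕ) :
    ∑ i : Fin n, qq ^ (μ i) * tt ^ (n + m + 1 - compBeta (appendZeros μ m) (Fin.castAdd m i))
      = ∑ i ∈ univ.filter (fun i : Fin n => μ i ≠ 0), qq ^ (μ i) * tt ^ (n + 1 - compBeta μ i)
        + tt ^ m * ∑ i ∈ univ.filter (fun i : Fin n => μ i = 0), tt ^ (n + 1 - compBeta μ i) := by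
  rw [← sum_filter_not_add_sum_filter univ (fun i : Fin n => μ i = 0), mul_sum]
  congr 1
  · refine sum_congr rfl fun i hi => ?_
    rw [compBeta_appendZeros, if_neg (mem_filter.mp hi).2]
    congr 2
    omega
  · refine sum_congr rfl fun i hi => ?_
    have hβ := compBeta_le μ i
    rw [compBeta_appendZeros, (mem_filter.mp hi).2, if_pos rfl, pow_zero, one_mul, ← pow_add]
    congr 1
    omega

theorem sum_kappaM_tail {n : ℕ} (μ : Fin n → ℕ) (m : ℕ) :
    ∑ r ∈ Icc 1 m, tt ^ ((univ.filter (fun j : Fin n => μ j ≠ 0)).card) * tt ^ (m + 1 - r)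
      = tt ^ (1 + (univ.filter (fun j : Fin n => μ j ≠ 0)).card) * (1 - tt ^ m) * (1 - tt)⁻¹ := by
  have hden : (1 : Qqt) - tt ≠ 0 := one_sub_X_ne_zero
  rw [← mul_sum, sum_Icc_pow_reflect, ← mul_neg_geom_sum tt m]
  field_simp
  ring

theorem kappaM_sub_kappaLimit {n : ℕ} (μ : Fin n → ℕ) (m : ℕ) :
    kappaM μ m - kappaLimit μ = tt ^ m *
      (∑ i ∈ univ.filter (fun i : Fin n => μ i = 0), tt ^ (n + 1 - compBeta μ i)
        - tt ^ (1 + (univ.filter (fun j : Fin n => μ j ≠ 0)).card) * (1 - tt)⁻¹) := by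
  rw [kappaM, kappaLimit, sum_kappaM_head, sum_kappaM_tail]
  ring

/-- In the `t`-adic topology, `κ_μ^{(m)}(q,t)` converges as `m → ∞` to
`κ_μ(q,t) = ∑_{i : μ_i ≠ 0} q^{μ_i} t^{n+1−β_μ(i)} + t^{1+#{j : μ_j ≠ 0}}/(1−t)`. -/
theorem kappaM_tadic_limit {n : ℕ} (μ : Fin n → ℕ) :
    TAdicConv (fun m => kappaM μ m)
      ((∑ i ∈ univ.filter (fun i : Fin n => μ i ≠ 0), qq ^ (μ i) * tt ^ (n + 1 - compBeta μ i))
        + tt ^ (1 + (univ.filter (fun j : Fin n => μ j ≠ 0)).card) * (1 - tt)⁻¹) :=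
  tAdicConv_of_sub_eq_X_pow_mul (kappaM_sub_kappaLimit μ)
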